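/- Let Ω ⊆ ℝ and let γ₀ ∈ ℝ be an accumulation point of Ω \ {γ₀}. Let β₁ : ℝ → ℂ be twice continuously differentiable on a neighborhood of γ₀ with β₁(γ₀) = 0, let D₁ : ℝ → ℂ be continuously differentiable on a neighborhood of γ₀ with D₁(γ₀) ≠ 0, and set α = β₁′(γ₀)/D₁(γ₀); assume Re(α) ≠ 0. Let P₁ : Ω → ℂ satisfy P₁(γ) ≠ 0 for all γ ∈ Ω and |P₁(γ)| → 0 as γ → γ₀ within Ω, and suppose there is C ≥ 0 such that | |P₁(γ)|²·D₁(γ) − β₁(γ) | ≤ C·|P₁(γ)|⁴ for all γ ∈ Ω. Then there exist δ > 0 and K > 0 such that for every γ ∈ Ω with 0 < |γ − γ₀| < δ one has | |P₁(γ)| − √(|α|·|γ − γ₀|) | ≤ K·|γ − γ₀|^{3/2}; i.e., the modulus of the first Fourier component satisfies |P₁| = √|α|·√|γ−γ₀| + O(|γ−γ₀|^{3/2}). -/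
import Mathlib

open Metric Real

lemma taylor1 (f : ℝ → ℂ) (x₀ : ℝ) (hf : ContDiffAt ℝ 2 f x₀) (h0 : f x₀ = 0) :
    ∃ δ > 0, ∃ M ≥ (0:ℝ), ∀ x, |x - x₀| < δ →
      ‖f x - (x - x₀) • deriv f x₀‖ ≤ M * (x - x₀)^2 := by
  obtain ⟨u, hu, hcd⟩ := hf.contDiffOn le_rfl (by simp)
  obtain ⟨r, hr, hball⟩ := Metric.mem_nhds_iff.mp hu
  have hcd' : ContDiffOn ℝ 2 f (ball x₀ r) := hcd.mono hball
  have hd1 : ContDiffOn ℝ 1 (deriv f) (ball x₀ r) :=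
    hcd'.deriv_of_isOpen isOpen_ball (by norm_num)
  have hd1' : ContDiffAt ℝ 1 (deriv f) x₀ :=
    hd1.contDiffAt (isOpen_ball.mem_nhds (by simp [hr]))
  obtain ⟨K, t, ht, hlip⟩ := hd1'.exists_lipschitzOnWith
  obtain ⟨r₂, hr₂, hball₂⟩ := Metric.mem_nhds_iff.mp ht
  refine ⟨min r r₂, by positivity, K, K.coe_nonneg, fun x hx => ?_⟩
  set c := deriv f x₀ with hc
  have hx0 : x₀ ∈ closedBall x₀ |x - x₀| := by simp
  have hxx : x ∈ closedBall x₀ |x - x₀| := by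
    simp [Real.dist_eq]
  have hsub : closedBall x₀ |x - x₀| ⊆ ball x₀ (min r r₂) := fun y hy => by
    simp only [mem_closedBall, Real.dist_eq] at hy ⊢
    exact lt_of_le_of_lt hy hx
  have hderiv : ∀ y ∈ closedBall x₀ |x - x₀|,
      HasDerivWithinAt (fun y => f y - (y - x₀) • c) (deriv f y - c)
        (closedBall x₀ |x - x₀|) y := by
    intro y hy
    have hyb : y ∈ ball x₀ r := by
      have := hsub hy; simp only [mem_ball] at this ⊢; exact lt_of_lt_of_le this (min_le_left _ _)
    have hdf : HasDerivAt f (deriv f y) y :=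
      (((hcd'.differentiableOn (by norm_num)) y hyb).differentiableAt
        (isOpen_ball.mem_nhds hyb)).hasDerivAt
    have h2 : HasDerivAt (fun y => (y - x₀) • c) c y := by
      simpa using ((hasDerivAt_id y).sub_const x₀).smul_const c
    exact (hdf.sub h2).hasDerivWithinAt
  have hbound : ∀ y ∈ closedBall x₀ |x - x₀|, ‖deriv f y - c‖ ≤ (K : ℝ) * |x - x₀| := by
    intro y hy
    have hyt : y ∈ t := hball₂ (by
      have := hsub hy; simp only [mem_ball] at this ⊢
      exact lt_of_lt_of_le this (min_le_right _ _))
    have hx₀t : x₀ ∈ t := hball₂ (by simp [hr₂])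
    have := hlip.dist_le_mul y hyt x₀ hx₀t
    rw [dist_eq_norm] at this
    refine this.trans ?_
    have : dist y x₀ ≤ |x - x₀| := by simpa [mem_closedBall] using hy
    have hK : (0:ℝ) ≤ K := K.coe_nonneg
    nlinarith [dist_nonneg (x := y) (y := x₀)]
  have := (convex_closedBall x₀ |x - x₀|).norm_image_sub_le_of_norm_hasDerivWithin_le
    hderiv hbound hx0 hxx
  simp only [h0, sub_self, zero_smul, sub_zero, zero_sub, norm_neg, neg_sub] at this
  calc ‖f x - (x - x₀) • c‖ ≤ (K : ℝ) * |x - x₀| * ‖x - x₀‖ := this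
    _ = (K : ℝ) * (x - x₀)^2 := by
        rw [Real.norm_eq_abs, mul_assoc, ← sq, sq_abs]
set_option maxHeartbeats 2000000 in
theorem stmt15 (Ω : Set ℝ) (γ₀ : ℝ) (hacc : γ₀ ∈ closure (Ω \ {γ₀}))
    (β₁ D₁ : ℝ → ℂ)
    (hβ : ContDiffAt ℝ 2 β₁ γ₀) (hβ0 : β₁ γ₀ = 0)
    (hD : ContDiffAt ℝ 1 D₁ γ₀) (hD0 : D₁ γ₀ ≠ 0)
    (α : ℂ) (hα : α = deriv β₁ γ₀ / D₁ γ₀) (hRe : α.re ≠ 0)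
    (P₁ : ℝ → ℂ) (hP0 : ∀ γ ∈ Ω, P₁ γ ≠ 0)
    (hPlim : Filter.Tendsto (fun γ => ‖P₁ γ‖) (nhdsWithin γ₀ Ω) (nhds 0))
    (C : ℝ) (hC : 0 ≤ C)
    (hamp : ∀ γ ∈ Ω, ‖((‖P₁ γ‖ : ℂ)) ^ 2 * D₁ γ - β₁ γ‖ ≤ C * ‖P₁ γ‖ ^ 4) :
    ∃ δ > 0, ∃ K > 0, ∀ γ ∈ Ω, γ ≠ γ₀ → |γ - γ₀| < δ →
      |‖P₁ γ‖ - Real.sqrt (‖α‖ * |γ - γ₀|)| ≤ K * |γ - γ₀| ^ ((3 : ℝ) / 2) := by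
  -- basic constants
  set d : ℝ := ‖D₁ γ₀‖ with hd_def
  have hd : 0 < d := norm_pos_iff.mpr hD0
  set c : ℂ := deriv β₁ γ₀ with hc_def
  set A : ℝ := ‖c‖ with hA_def
  have hA0 : 0 ≤ A := norm_nonneg _
  have hαA : ‖α‖ = A / d := by rw [hα, norm_div]
  have hαpos : 0 < ‖α‖ := by
    refine norm_pos_iff.mpr fun h => hRe ?_
    rw [h]; rfl
  -- Taylor bound for β₁
  obtain ⟨δ₁, hδ₁, M₁, hM₁0, hTay⟩ := taylor1 β₁ γ₀ hβ hβ0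
  -- Lipschitz bound for D₁
  obtain ⟨K₂, t₂, ht₂, hlip₂⟩ := hD.exists_lipschitzOnWith
  obtain ⟨r₂, hr₂, hball₂⟩ := Metric.mem_nhds_iff.mp ht₂
  have hK₂0 : (0:ℝ) ≤ (K₂ : ℝ) := K₂.coe_nonneg
  have hLipD : ∀ γ : ℝ, |γ - γ₀| < r₂ → ‖D₁ γ - D₁ γ₀‖ ≤ (K₂ : ℝ) * |γ - γ₀| := by
    intro γ hγ
    have hγt : γ ∈ t₂ := hball₂ (by simpa [Metric.mem_ball, Real.dist_eq] using hγ)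
    have hγ₀t : γ₀ ∈ t₂ := hball₂ (by simp [hr₂])
    have := hlip₂.dist_le_mul γ hγt γ₀ hγ₀t
    rwa [dist_eq_norm, Real.dist_eq] at this
  -- smallness of ‖P₁‖ near γ₀
  have hε₀ : (0:ℝ) < Real.sqrt (d / (4 * (C + 1))) := Real.sqrt_pos.mpr (by positivity)
  obtain ⟨δ₂, hδ₂, hsmall⟩ := (Metric.tendsto_nhdsWithin_nhds.mp hPlim) _ hε₀
  -- constants
  set B : ℝ := 2 * (A + M₁) / d with hB_def
  have hB0 : 0 ≤ B := by positivity
  set M₂ : ℝ := (K₂ : ℝ) * B + C * B ^ 2 + M₁ with hM₂_def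
  have hM₂0 : 0 ≤ M₂ := by positivity
  set M₃ : ℝ := M₂ / d with hM₃_def
  have hM₃0 : 0 ≤ M₃ := by positivity
  refine ⟨min (min δ₁ r₂) (min δ₂ (min (d / (4 * ((K₂ : ℝ) + 1))) 1)), by positivity,
    M₃ / Real.sqrt ‖α‖ + 1, by positivity, fun γ hγ hne hδ => ?_⟩
  set t : ℝ := γ - γ₀ with ht_def
  set at' : ℝ := |t| with hat_def
  have hat0 : 0 < at' := abs_pos.mpr (sub_ne_zero.mpr hne)
  have hat1 : at' < δ₁ := lt_of_lt_of_le hδ ((min_le_left _ _).trans (min_le_left _ _))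
  have hat2 : at' < r₂ := lt_of_lt_of_le hδ ((min_le_left _ _).trans (min_le_right _ _))
  have hat3 : at' < δ₂ := lt_of_lt_of_le hδ ((min_le_right _ _).trans (min_le_left _ _))
  have hat4 : at' ≤ d / (4 * ((K₂ : ℝ) + 1)) := le_of_lt (lt_of_lt_of_le hδ
    ((min_le_right _ _).trans ((min_le_right _ _).trans (min_le_left _ _))))
  have hat5 : at' ≤ 1 := le_of_lt (lt_of_lt_of_le hδ
    ((min_le_right _ _).trans ((min_le_right _ _).trans (min_le_right _ _))))
  set n : ℝ := ‖P₁ γ‖ with hn_def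
  have hn0 : 0 ≤ n := norm_nonneg _
  set x : ℝ := n ^ 2 with hx_def
  have hx0 : 0 ≤ x := sq_nonneg n
  -- smallness: x ≤ d / (4 (C+1))
  have hx_le : x ≤ d / (4 * (C + 1)) := by
    have hsm := hsmall hγ (by simpa [Real.dist_eq] using hat3)
    rw [Real.dist_eq, sub_zero] at hsm
    have : n < Real.sqrt (d / (4 * (C + 1))) := by
      simpa [abs_of_nonneg hn0] using hsm
    have := (Real.lt_sqrt hn0).mp this
    linarith
  -- amplitude equation
  have h1 : ‖(x : ℂ) * D₁ γ - β₁ γ‖ ≤ C * x ^ 2 := by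
    have := hamp γ hγ
    have hcast : ((n : ℂ)) ^ 2 = ((x : ℂ)) := by rw [hx_def]; push_cast; ring
    rw [hcast] at this
    calc ‖(x : ℂ) * D₁ γ - β₁ γ‖ ≤ C * n ^ 4 := this
      _ = C * x ^ 2 := by rw [hx_def]; ring
  have h2 : |x * ‖D₁ γ‖ - ‖β₁ γ‖| ≤ C * x ^ 2 := by
    have hnorm : ‖(x : ℂ) * D₁ γ‖ = x * ‖D₁ γ‖ := by
      rw [norm_mul, Complex.norm_real, Real.norm_eq_abs, abs_of_nonneg hx0]
    calc |x * ‖D₁ γ‖ - ‖β₁ γ‖| = |‖(x : ℂ) * D₁ γ‖ - ‖β₁ γ‖| := by rw [hnorm]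
      _ ≤ ‖(x : ℂ) * D₁ γ - β₁ γ‖ := abs_norm_sub_norm_le _ _
      _ ≤ C * x ^ 2 := h1
  -- Taylor
  have h3 : |‖β₁ γ‖ - A * at'| ≤ M₁ * t ^ 2 := by
    have htay := hTay γ hat1
    have hnorm : ‖t • c‖ = A * at' := by
      rw [norm_smul, Real.norm_eq_abs, mul_comm]
    calc |‖β₁ γ‖ - A * at'| = |‖β₁ γ‖ - ‖t • c‖| := by rw [hnorm]
      _ ≤ ‖β₁ γ - t • c‖ := abs_norm_sub_norm_le _ _
      _ ≤ M₁ * t ^ 2 := htay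
  -- Lipschitz for D₁
  have h4 : |x * ‖D₁ γ‖ - x * d| ≤ x * ((K₂ : ℝ) * at') := by
    have hld := hLipD γ hat2
    have : |‖D₁ γ‖ - d| ≤ (K₂ : ℝ) * at' := (abs_norm_sub_norm_le _ _).trans hld
    calc |x * ‖D₁ γ‖ - x * d| = x * |‖D₁ γ‖ - d| := by
          rw [← mul_sub, abs_mul, abs_of_nonneg hx0]
      _ ≤ x * ((K₂ : ℝ) * at') := by
          exact mul_le_mul_of_nonneg_left this hx0
  -- the key combined estimate
  have habs : |x * d - A * at'| ≤ x * ((K₂ : ℝ) * at') + C * x ^ 2 + M₁ * t ^ 2 := by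
    have := abs_sub_le (x * d) (x * ‖D₁ γ‖) (A * at')
    have h24 := abs_sub_le (x * ‖D₁ γ‖) ‖β₁ γ‖ (A * at')
    rw [abs_sub_comm] at h4
    linarith [h2, h3]
  -- bounds to absorb small terms
  have h6 : C * x ^ 2 ≤ d / 4 * x := by
    have h6' : (C + 1) * x ≤ d / 4 := by
      rw [le_div_iff₀ (by positivity : (0:ℝ) < 4 * (C + 1))] at hx_le
      linarith
    linarith [mul_le_mul_of_nonneg_right h6' hx0, sq_nonneg x]
  have h7 : x * ((K₂ : ℝ) * at') ≤ d / 4 * x := by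
    have h7' : ((K₂ : ℝ) + 1) * at' ≤ d / 4 := by
      rw [le_div_iff₀ (by positivity : (0:ℝ) < 4 * ((K₂ : ℝ) + 1))] at hat4
      linarith
    linarith [mul_le_mul_of_nonneg_right h7' hx0, mul_nonneg hat0.le hx0]
  -- x ≤ B * at'
  have ht2at : t ^ 2 ≤ at' := by
    have h1 : t ^ 2 = at' * at' := by
      rw [hat_def, ← abs_mul, abs_of_nonneg (mul_self_nonneg t)]; ring
    have h2 : at' * at' ≤ at' := mul_le_of_le_one_left hat0.le hat5
    linarith
  have h9 : x ≤ B * at' := by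
    have h8 : x * d - A * at' ≤ x * ((K₂ : ℝ) * at') + C * x ^ 2 + M₁ * t ^ 2 :=
      (abs_le.mp habs).2
    have hMt : M₁ * t ^ 2 ≤ M₁ * at' := mul_le_mul_of_nonneg_left ht2at hM₁0
    have hxd : x * d ≤ 2 * (A + M₁) * at' := by linarith
    rw [hB_def, show 2 * (A + M₁) / d * at' = 2 * (A + M₁) * at' / d by ring,
      le_div_iff₀ hd]
    linarith
  -- refined estimate
  have habs2 : |x * d - A * at'| ≤ M₂ * t ^ 2 := by
    have ht2 : t ^ 2 = at' ^ 2 := (sq_abs t).symm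
    have hxx : C * x ^ 2 ≤ C * B ^ 2 * at' ^ 2 := by
      calc C * x ^ 2 ≤ C * (B * at') ^ 2 :=
            mul_le_mul_of_nonneg_left (pow_le_pow_left₀ hx0 h9 2) hC
        _ = C * B ^ 2 * at' ^ 2 := by ring
    have hKx : x * ((K₂ : ℝ) * at') ≤ (K₂ : ℝ) * B * at' ^ 2 := by
      calc x * ((K₂ : ℝ) * at') ≤ (B * at') * ((K₂ : ℝ) * at') :=
            mul_le_mul_of_nonneg_right h9 (by positivity)
        _ = (K₂ : ℝ) * B * at' ^ 2 := by ring
    rw [hM₂_def, ht2]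
    rw [ht2] at habs
    linarith
  have h10 : |x - ‖α‖ * at'| ≤ M₃ * t ^ 2 := by
    have heq : x - ‖α‖ * at' = (x * d - A * at') / d := by
      rw [hαA]; field_simp
    rw [heq, abs_div, abs_of_pos hd, hM₃_def,
      show M₂ / d * t ^ 2 = M₂ * t ^ 2 / d by ring]
    exact div_le_div_of_nonneg_right habs2 hd.le
  -- final square-root step
  set s : ℝ := Real.sqrt (‖α‖ * at') with hs_def
  have hs : 0 < s := Real.sqrt_pos.mpr (by positivity)
  have hs2 : s ^ 2 = ‖α‖ * at' := Real.sq_sqrt (by positivity)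
  have hkey : |n - s| * s ≤ |x - ‖α‖ * at'| := by
    calc |n - s| * s ≤ |n - s| * (n + s) :=
          mul_le_mul_of_nonneg_left (by linarith) (abs_nonneg _)
      _ = |n - s| * |n + s| := by
          rw [abs_of_nonneg (show (0:ℝ) ≤ n + s by linarith)]
      _ = |(n - s) * (n + s)| := (abs_mul _ _).symm
      _ = |n ^ 2 - s ^ 2| := by ring_nf
      _ = |x - ‖α‖ * at'| := by rw [hs2, hx_def]
  have hfinal : |n - s| ≤ M₃ * t ^ 2 / s := by
    rw [le_div_iff₀ hs]
    exact hkey.trans (h10)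
  -- convert to rpow
  have hsqrtα : 0 < Real.sqrt ‖α‖ := Real.sqrt_pos.mpr hαpos
  have hsqrtat : 0 < Real.sqrt at' := Real.sqrt_pos.mpr hat0
  have hsplit : s = Real.sqrt ‖α‖ * Real.sqrt at' := Real.sqrt_mul (le_of_lt hαpos) _
  have hpow : at' ^ (2:ℕ) = at' ^ ((3:ℝ)/2) * Real.sqrt at' := by
    rw [Real.sqrt_eq_rpow, ← Real.rpow_natCast at' 2, ← Real.rpow_add hat0]
    norm_num
  have hconv : M₃ * t ^ 2 / s = M₃ / Real.sqrt ‖α‖ * at' ^ ((3:ℝ)/2) := by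
    have ht2 : t ^ 2 = at' ^ (2:ℕ) := (sq_abs t).symm
    calc M₃ * t ^ 2 / s
        = M₃ * at' ^ ((3:ℝ)/2) * Real.sqrt at' / (Real.sqrt ‖α‖ * Real.sqrt at') := by
          rw [ht2, hpow, hsplit, ← mul_assoc]
      _ = M₃ * at' ^ ((3:ℝ)/2) / Real.sqrt ‖α‖ := mul_div_mul_right _ _ hsqrtat.ne'
      _ = M₃ / Real.sqrt ‖α‖ * at' ^ ((3:ℝ)/2) := mul_div_right_comm _ _ _
  calc |n - s| ≤ M₃ * t ^ 2 / s := hfinal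
    _ = M₃ / Real.sqrt ‖α‖ * at' ^ ((3:ℝ)/2) := hconv
    _ ≤ (M₃ / Real.sqrt ‖α‖ + 1) * at' ^ ((3:ℝ)/2) :=
        mul_le_mul_of_nonneg_right (le_add_of_nonneg_right zero_le_one)
          (Real.rpow_nonneg (abs_nonneg _) _)
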